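/- arXiv:1404.2736 — 2 statements merged into one kernel-verified Lean document; each statement's English description precedes it below -/
import Mathlib

section
/- (Stable Poincaré polynomial of the colored Hopf link) Fix j ∈ ℕ. There exists an element P ∈ ℚ(q)[a^{±1}, s^{±1}, t] such that for all natural numbers N ≥ i ≥ j, substituting a = q^N and s = q^{i-j} into P yields Σ_{k=0}^{j} t^{2k} · q^{k(2+N)} · [N-i choose k]_q · [i choose j-k]_q, the Poincaré polynomial of Λ^i-reduced sl_N homology of the (Λ^i, Λ^j)-colored Hopf link. -/
/-!
Under `a = q^N`, `s = q^(i-j)` the monomials `a s⁻¹ q^(-j-l)` and `s q^(j-l)` become `q^(N-i-l)`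
and `q^(i-l)`. Hence the quantum integers `[N-i-l]` and `[i-l]` are specializations of Laurent
polynomials in `a, s` that do not depend on `N` or `i`, and writing each quantum binomial as a
falling product of quantum integers over a quantum factorial exhibits the whole sum as the
specialization of a single `P`.
-/

open Finset

/-- The field ℚ(q) of rational functions over ℚ. -/
noncomputable abbrev F : Type := RatFunc ℚ

/-- The variable q of ℚ(q). -/
noncomputable def q : F := RatFunc.X

/-- The quantum integer [m] := (q^m - q^{-m})/(q - q^{-1}) ∈ ℚ(q). -/
noncomputable def qint (m : ℤ) : F := (q ^ m - q ^ (-m)) / (q - q⁻¹)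

/-- The quantum factorial [n]! := [1][2]⋯[n]. -/
noncomputable def qfac (n : ℕ) : F := ∏ k ∈ range n, qint ((k : ℤ) + 1)

/-- The balanced quantum binomial [h choose c]_q, zero when c > h. -/
noncomputable def qbinom (h c : ℕ) : F :=
  if c ≤ h then qfac h / (qfac c * qfac (h - c)) else 0

open AddMonoidAlgebra

lemma q_ne_zero : q ≠ 0 := RatFunc.X_ne_zero

lemma intDegree_q_zpow (n : ℤ) : (q ^ n).intDegree = n := by
  obtain ⟨n, rfl | rfl⟩ := Int.eq_nat_or_neg n
  · rw [zpow_natCast, q, ← RatFunc.algebraMap_X, ← map_pow, RatFunc.intDegree_polynomial,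
      Polynomial.natDegree_X_pow]
  · rw [zpow_neg, RatFunc.intDegree_inv, zpow_natCast, q, ← RatFunc.algebraMap_X, ← map_pow,
      RatFunc.intDegree_polynomial, Polynomial.natDegree_X_pow]

lemma q_zpow_sub_zpow_neg_ne_zero {m : ℤ} (hm : m ≠ 0) : q ^ m - q ^ (-m) ≠ 0 := by
  intro h
  have := congrArg RatFunc.intDegree (sub_eq_zero.mp h)
  rw [intDegree_q_zpow, intDegree_q_zpow] at this
  omega

lemma qint_ne_zero {m : ℤ} (hm : m ≠ 0) : qint m ≠ 0 := by
  refine div_ne_zero (q_zpow_sub_zpow_neg_ne_zero hm) ?_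
  simpa using q_zpow_sub_zpow_neg_ne_zero one_ne_zero

lemma qint_zero : qint 0 = 0 := by simp [qint]

lemma qfac_ne_zero (n : ℕ) : qfac n ≠ 0 :=
  prod_ne_zero_iff.mpr fun k _ => qint_ne_zero (by positivity)

lemma qfac_eq_prod_mul_qfac_sub {h c : ℕ} (hc : c ≤ h) :
    qfac h = (∏ l ∈ range c, qint ((h : ℤ) - l)) * qfac (h - c) := by
  obtain ⟨n, rfl⟩ := Nat.exists_eq_add_of_le hc
  rw [Nat.add_sub_cancel_left, qfac, qfac, add_comm c n, prod_range_add, mul_comm,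
    ← prod_range_reflect]
  refine congrArg₂ _ (prod_congr rfl fun l hl => congrArg qint ?_) rfl
  have := mem_range.mp hl
  push_cast
  omega

lemma qbinom_eq_prod_div (h c : ℕ) :
    qbinom h c = (∏ l ∈ range c, qint ((h : ℤ) - l)) / qfac c := by
  by_cases hc : c ≤ h
  · rw [qbinom, if_pos hc, qfac_eq_prod_mul_qfac_sub hc,
      mul_div_mul_right _ _ (qfac_ne_zero _)]
  · rw [qbinom, if_neg hc, prod_eq_zero (mem_range.mpr (not_le.mp hc)) (by simp [qint_zero]),
      zero_div]

noncomputable section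

open Polynomial (C X C_mul C_sub)

def monomialEval (N d : ℤ) : Multiplicative (ℤ × ℤ) →* Polynomial F where
  toFun m := C (q ^ (N * m.toAdd.1 + d * m.toAdd.2))
  map_one' := by simp
  map_mul' x y := by
    rw [← C_mul, ← zpow_add₀ q_ne_zero, toAdd_mul, Prod.fst_add, Prod.snd_add]
    ring_nf

def laurentEval (N d : ℤ) : (Polynomial F)[ℤ × ℤ] →ₐ[Polynomial F] Polynomial F :=
  lift _ _ _ (monomialEval N d)

lemma laurentEval_apply (N d : ℤ) (φ : (Polynomial F)[ℤ × ℤ]) :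
    laurentEval N d φ = φ.coeff.sum fun m c => C (q ^ (N * m.1 + d * m.2)) * c := by
  rw [laurentEval, lift_apply]
  exact Finsupp.sum_congr fun m _ => mul_comm _ _

lemma laurentEval_single (N d : ℤ) (m : ℤ × ℤ) (p : Polynomial F) :
    laurentEval N d (single m p) = C (q ^ (N * m.1 + d * m.2)) * p := by
  rw [laurentEval, lift_single, smul_eq_mul, mul_comm]
  rfl

/-- The quantum integer `(x q^c - x⁻¹ q^(-c)) / (q - q⁻¹)` of the monomial `x = a^m.1 s^m.2`. -/
def laurentQint (m : ℤ × ℤ) (c : ℤ) : (Polynomial F)[ℤ × ℤ] :=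
  single m (C (q ^ c / (q - q⁻¹))) - single (-m) (C (q ^ (-c) / (q - q⁻¹)))

lemma laurentEval_laurentQint (N d : ℤ) (m : ℤ × ℤ) (c : ℤ) :
    laurentEval N d (laurentQint m c) = C (qint (N * m.1 + d * m.2 + c)) := by
  rw [laurentQint, map_sub, laurentEval_single, laurentEval_single, ← C_mul, ← C_mul, ← C_sub,
    qint, mul_div_assoc', mul_div_assoc', ← sub_div, ← zpow_add₀ q_ne_zero,
    ← zpow_add₀ q_ne_zero, Prod.fst_neg, Prod.snd_neg]
  ring_nf

/-- The exponent `(m₁, m₂)` stands for `a^m₁ s^m₂`; coefficients lie in `ℚ(q)[t]`. -/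
def hopfPoincare (j : ℕ) : (Polynomial F)[ℤ × ℤ] :=
  ∑ k ∈ range (j + 1),
    single ((k : ℤ), 0) (X ^ (2 * k) * C (q ^ (2 * k) / (qfac k * qfac (j - k)))) *
      (∏ l ∈ range k, laurentQint (1, -1) (-j - l)) *
      ∏ l ∈ range (j - k), laurentQint (0, 1) (j - l)

lemma laurentEval_hopfPoincare {j i N : ℕ} (hiN : i ≤ N) :
    laurentEval N (i - j) (hopfPoincare j) =
      ∑ k ∈ range (j + 1),
        X ^ (2 * k) * C (q ^ (k * (2 + N)) * qbinom (N - i) k * qbinom i (j - k)) := by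
  have hA (l : ℕ) : (N : ℤ) * 1 + (i - j) * (-1) + (-j - l) = ((N - i : ℕ) : ℤ) - l := by omega
  have hB (l : ℕ) : (N : ℤ) * 0 + (i - j) * 1 + (j - l) = (i : ℤ) - l := by omega
  have hpow (k : ℕ) : q ^ (k * (2 + N)) = q ^ ((N : ℤ) * k + (i - j) * 0) * q ^ (2 * k) := by
    rw [← zpow_natCast, ← zpow_natCast, ← zpow_add₀ q_ne_zero]
    push_cast
    ring_nf
  rw [hopfPoincare, map_sum]
  refine sum_congr rfl fun k _ => ?_
  simp only [map_mul, map_prod, laurentEval_single, laurentEval_laurentQint, hA, hB, hpow,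
    qbinom_eq_prod_div, div_eq_mul_inv, mul_inv]
  ring

end

/-- Stable Poincaré polynomial of the colored Hopf link.  An element
P ∈ ℚ(q)[a^{±1}, s^{±1}, t] is encoded as a finitely supported family of
polynomials in t (Laurent exponents of a and s indexed by ℤ × ℤ); substituting
a = q^N and s = q^{i-j} means summing the coefficient polynomials weighted by
q^{N·m₁ + (i-j)·m₂}.  The theorem asserts the existence of such a P whose
specialization at every N ≥ i ≥ j equals
Σ_{k=0}^{j} t^{2k}·q^{k(2+N)}·[N-i choose k]_q·[i choose j-k]_q,
the Poincaré polynomial of Λ^i-reduced sl_N homology of the (Λ^i,Λ^j)-colored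
Hopf link. -/
theorem hopf_stable_poincare (j : ℕ) :
    ∃ P : (ℤ × ℤ) →₀ Polynomial F,
      ∀ N i : ℕ, j ≤ i → i ≤ N →
        (P.sum fun m c =>
            Polynomial.C (q ^ ((N : ℤ) * m.1 + ((i : ℤ) - (j : ℤ)) * m.2)) * c) =
          ∑ k ∈ range (j + 1),
            Polynomial.X ^ (2 * k) *
              Polynomial.C (q ^ (k * (2 + N)) * qbinom (N - i) k * qbinom i (j - k)) :=
  ⟨(hopfPoincare j).coeff, fun N i _ hiN => by
    rw [← laurentEval_apply, laurentEval_hopfPoincare hiN]⟩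
end

section
/- For natural numbers k ≤ j ≤ i ≤ N, the common value V := [N-k choose i]_q·[j choose k]_q·[N choose j]_q of the Hopf-link web evaluation, divided by the unknot evaluation [N choose i]_q, equals [N-k choose j-k]_q·[N-i choose k]_q; moreover this quotient, as a Laurent polynomial in q, is invariant under q ↦ q^{-1} and its value at q = 1 equals C(N-k, j-k)·C(N-i, k). -/
open Finset

/-- The quantum integer [r] := x^{r-1} + x^{r-3} + ⋯ + x^{1-r}, at an element x of a
field; x := q gives the quantum integer in ℚ(q), x := q⁻¹ implements q ↦ q⁻¹, and
x := 1 implements evaluation at q = 1. -/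
noncomputable def qintAt {K : Type*} [Field K] (x : K) (r : ℕ) : K :=
  ∑ l ∈ range r, x ^ ((r : ℤ) - 1 - 2 * (l : ℤ))

/-- The quantum factorial [n]! := [1][2]⋯[n], at x. -/
noncomputable def qfacAt {K : Type*} [Field K] (x : K) (n : ℕ) : K :=
  ∏ k ∈ range n, qintAt x (k + 1)

/-- The balanced quantum binomial [h choose c]_q := [h]!/([c]![h-c]!) at x, zero for
c > h. -/
noncomputable def qbinomAt {K : Type*} [Field K] (x : K) (h c : ℕ) : K :=
  if c ≤ h then qfacAt x h / (qfacAt x c * qfacAt x (h - c)) else 0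

lemma qintAt_inv {K : Type*} [Field K] (x : K) (r : ℕ) :
    qintAt x⁻¹ r = qintAt x r := by
  unfold qintAt
  have : ∀ l ∈ range r, (x⁻¹) ^ ((r : ℤ) - 1 - 2 * (l : ℤ)) =
      x ^ ((r : ℤ) - 1 - 2 * (((r - 1 - l : ℕ) : ℤ))) := by
    intro l hl
    rw [mem_range] at hl
    rw [inv_zpow']
    congr 1
    push_cast [Nat.cast_sub (by omega : l ≤ r - 1)]
    omega
  rw [Finset.sum_congr rfl this]
  exact Finset.sum_range_reflect (fun m => x ^ ((r : ℤ) - 1 - 2 * (m : ℤ))) r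

lemma qfacAt_inv {K : Type*} [Field K] (x : K) (n : ℕ) :
    qfacAt x⁻¹ n = qfacAt x n := by
  unfold qfacAt; exact Finset.prod_congr rfl fun k _ => qintAt_inv x (k + 1)

lemma qbinomAt_inv {K : Type*} [Field K] (x : K) (h c : ℕ) :
    qbinomAt x⁻¹ h c = qbinomAt x h c := by
  unfold qbinomAt; rw [qfacAt_inv, qfacAt_inv, qfacAt_inv]

lemma qintAt_one (r : ℕ) : qintAt (1 : ℚ) r = r := by
  simp [qintAt]

lemma qfacAt_one (n : ℕ) : qfacAt (1 : ℚ) n = n.factorial := by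
  induction n with
  | zero => simp [qfacAt]
  | succ m ih =>
    rw [qfacAt, Finset.prod_range_succ, ← qfacAt, ih, qintAt_one, Nat.factorial_succ]
    push_cast; ring

lemma qbinomAt_one (h c : ℕ) : qbinomAt (1 : ℚ) h c = h.choose c := by
  unfold qbinomAt
  split
  · rw [qfacAt_one, qfacAt_one, qfacAt_one, Nat.cast_choose ℚ (by assumption)]
  · rw [Nat.choose_eq_zero_of_lt (by omega), Nat.cast_zero]

lemma qintAt_X_ne_zero (r : ℕ) (hr : 0 < r) : qintAt (RatFunc.X : F) r ≠ 0 := by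
  have hX : (RatFunc.X : F) ≠ 0 := RatFunc.X_ne_zero
  have key : (RatFunc.X : F) ^ (r - 1) * qintAt (RatFunc.X : F) r =
      ∑ m ∈ range r, (RatFunc.X : F) ^ (2 * m) := by
    rw [qintAt, Finset.mul_sum]
    rw [← Finset.sum_range_reflect (fun m => (RatFunc.X : F) ^ (2 * m)) r]
    refine Finset.sum_congr rfl fun l hl => ?_
    rw [mem_range] at hl
    rw [← zpow_natCast (RatFunc.X : F) (r - 1), ← zpow_add₀ hX,
      ← zpow_natCast (RatFunc.X : F) (2 * (r - 1 - l))]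
    congr 1
    push_cast [Nat.cast_sub (by omega : l ≤ r - 1), Nat.cast_sub (by omega : 1 ≤ r)]
    omega
  have hp : (∑ m ∈ range r, (Polynomial.X : Polynomial ℚ) ^ (2 * m)) ≠ 0 := by
    intro h
    have := congrArg (Polynomial.eval 1) h
    simp [Polynomial.eval_finset_sum] at this
    omega
  have hS : (∑ m ∈ range r, (RatFunc.X : F) ^ (2 * m)) ≠ 0 := by
    have : (∑ m ∈ range r, (RatFunc.X : F) ^ (2 * m)) =
        algebraMap (Polynomial ℚ) F (∑ m ∈ range r, Polynomial.X ^ (2 * m)) := by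
      rw [map_sum]
      exact Finset.sum_congr rfl fun m _ => by rw [map_pow, RatFunc.algebraMap_X]
    rw [this]
    exact RatFunc.algebraMap_ne_zero hp
  intro h
  rw [h, mul_zero] at key
  exact hS key.symm


lemma div_aux (a b c d e f g h i : F) (h2 : b ≠ 0) (h3 : c ≠ 0)
    (h4 : d ≠ 0) (h5 : e ≠ 0) (h6 : f ≠ 0) (h7 : g ≠ 0) (h8 : h ≠ 0) :
    (a/(b*c) * (d/(e*f)) * (g/(d*h))) / (g/(b*i)) = (a/(f*h)) * (i/(e*c)) := by
  rw [div_mul_div_comm, div_mul_div_comm, div_div_div_eq, div_mul_div_comm,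
    div_eq_div_iff (by simp_all) (by simp_all)]
  ring

lemma qfacAt_X_ne_zero (n : ℕ) : qfacAt (RatFunc.X : F) n ≠ 0 := by
  unfold qfacAt
  exact Finset.prod_ne_zero_iff.mpr fun k _ => qintAt_X_ne_zero (k + 1) (by omega)

/-- For k ≤ j ≤ i ≤ N: the Hopf-link web evaluation
V := [N-k choose i]·[j choose k]·[N choose j], divided by the unknot evaluation
[N choose i], equals [N-k choose j-k]·[N-i choose k]; this quotient is invariant
under q ↦ q⁻¹ and its value at q = 1 is C(N-k,j-k)·C(N-i,k). -/
theorem hopf_quotient (N i j k : ℕ) (hkj : k ≤ j) (hji : j ≤ i) (hiN : i ≤ N) :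
    (qbinomAt (RatFunc.X : F) (N - k) i * qbinomAt (RatFunc.X : F) j k *
          qbinomAt (RatFunc.X : F) N j) / qbinomAt (RatFunc.X : F) N i =
        qbinomAt (RatFunc.X : F) (N - k) (j - k) * qbinomAt (RatFunc.X : F) (N - i) k ∧
      (qbinomAt (RatFunc.X : F)⁻¹ (N - k) i * qbinomAt (RatFunc.X : F)⁻¹ j k *
          qbinomAt (RatFunc.X : F)⁻¹ N j) / qbinomAt (RatFunc.X : F)⁻¹ N i =
        (qbinomAt (RatFunc.X : F) (N - k) i * qbinomAt (RatFunc.X : F) j k *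
          qbinomAt (RatFunc.X : F) N j) / qbinomAt (RatFunc.X : F) N i ∧
      qbinomAt (1 : ℚ) (N - k) (j - k) * qbinomAt (1 : ℚ) (N - i) k =
        ((N - k).choose (j - k) * (N - i).choose k : ℚ) := by
  refine ⟨?_, ?_, ?_⟩
  · by_cases hc : i + k ≤ N
    · have c1 : i ≤ N - k := by omega
      have c2 : j ≤ N := by omega
      have c3 : j - k ≤ N - k := by omega
      have c4 : k ≤ N - i := by omega
      rw [qbinomAt, if_pos c1, qbinomAt, if_pos hkj, qbinomAt, if_pos c2, qbinomAt,
        if_pos hiN, qbinomAt, if_pos c3, qbinomAt, if_pos c4]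
      have e1 : N - k - i = N - i - k := by omega
      have e2 : N - k - (j - k) = N - j := by omega
      rw [e1, e2]
      have h1 := qfacAt_X_ne_zero (N - k)
      have h2 := qfacAt_X_ne_zero i
      have h3 := qfacAt_X_ne_zero (N - i - k)
      have h4 := qfacAt_X_ne_zero j
      have h5 := qfacAt_X_ne_zero k
      have h6 := qfacAt_X_ne_zero (j - k)
      have h7 := qfacAt_X_ne_zero N
      have h8 := qfacAt_X_ne_zero (N - j)
      have h9 := qfacAt_X_ne_zero (N - i)
      exact div_aux _ _ _ _ _ _ _ _ _ h2 h3 h4 h5 h6 h7 h8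
    · have z1 : qbinomAt (RatFunc.X : F) (N - k) i = 0 := by
        rw [qbinomAt, if_neg (by omega)]
      have z2 : qbinomAt (RatFunc.X : F) (N - i) k = 0 := by
        rw [qbinomAt, if_neg (by omega)]
      rw [z1, z2]
      simp
  · rw [qbinomAt_inv, qbinomAt_inv, qbinomAt_inv, qbinomAt_inv]
  · rw [qbinomAt_one, qbinomAt_one]
end
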